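/- Let $D_1, \dots, D_N > 0$, $z_1, \dots, z_N \in \mathbb{R}$, and let $c_1, \dots, c_N$ be nonnegative smooth periodic functions on $\mathbb{T}^2$ with $\rho = \sum_{i=1}^N z_i c_i$ and $-\Delta\Phi = \rho$. Then with $D = \min_i D_i$, $\sum_{i=1}^N D_i \left\| \frac{\nabla c_i + z_i c_i \nabla\Phi}{\sqrt{c_i}} \right\|_{L^2}^2 \ge D\|\rho\|_{L^2}^2$ (where the left-hand integrand is interpreted as $|2\nabla\sqrt{c_i} + z_i\sqrt{c_i}\nabla\Phi|^2$). -/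

import Mathlib

open MeasureTheory Real

/-- The fundamental domain `[0,2π]²` of the torus `𝕋² = [0,2π]²`. -/
def box : Set (ℝ × ℝ) := Set.Ioc 0 (2*Real.pi) ×ˢ Set.Ioc 0 (2*Real.pi)

/-- A function on `ℝ²` is `2π`-periodic in both variables. -/
def Per (g : ℝ × ℝ → ℝ) : Prop :=
  (∀ x : ℝ × ℝ, g (x.1 + 2*Real.pi, x.2) = g x) ∧
  (∀ x : ℝ × ℝ, g (x.1, x.2 + 2*Real.pi) = g x)

/-- Euclidean dot product on `ℝ²`. -/
def dot (a b : ℝ × ℝ) : ℝ := a.1 * b.1 + a.2 * b.2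

/-- Gradient of a scalar function on `ℝ²`. -/
noncomputable def grad (g : ℝ × ℝ → ℝ) (x : ℝ × ℝ) : ℝ × ℝ :=
  (fderiv ℝ g x (1, 0), fderiv ℝ g x (0, 1))

/-- Divergence of a vector field on `ℝ²`. -/
noncomputable def divg (v : ℝ × ℝ → ℝ × ℝ) (x : ℝ × ℝ) : ℝ :=
  fderiv ℝ (fun y => (v y).1) x (1, 0) + fderiv ℝ (fun y => (v y).2) x (0, 1)

/-- Laplacian of a scalar function on `ℝ²`. -/
noncomputable def lap (g : ℝ × ℝ → ℝ) (x : ℝ × ℝ) : ℝ :=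
  fderiv ℝ (fun y => fderiv ℝ g y (1, 0)) x (1, 0) +
  fderiv ℝ (fun y => fderiv ℝ g y (0, 1)) x (0, 1)

/- ### Auxiliary lemmas -/

lemma contpd {g : ℝ × ℝ → ℝ} (hg : ContDiff ℝ (⊤ : ℕ∞) g) (w : ℝ × ℝ) :
    ContDiff ℝ (⊤ : ℕ∞) (fun x => fderiv ℝ g x w) :=
  (hg.fderiv_right (by simp)).clm_apply contDiff_const

lemma intbox {F : ℝ × ℝ → ℝ} (hF : Continuous F) : IntegrableOn F box := by
  have h1 : IsCompact (Set.Icc (0:ℝ) (2*Real.pi) ×ˢ Set.Icc (0:ℝ) (2*Real.pi)) :=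
    isCompact_Icc.prod isCompact_Icc
  exact (hF.continuousOn.integrableOn_compact h1).mono_set
    (Set.prod_mono Set.Ioc_subset_Icc_self Set.Ioc_subset_Icc_self)

lemma fderiv_translate {g : ℝ × ℝ → ℝ} (hg : Differentiable ℝ g) (v : ℝ × ℝ)
    (hper : ∀ p : ℝ × ℝ, g (p + v) = g p) (x : ℝ × ℝ) :
    fderiv ℝ g (x + v) = fderiv ℝ g x := by
  have hT : HasFDerivAt (fun p : ℝ × ℝ => p + v) (ContinuousLinearMap.id ℝ (ℝ × ℝ)) x :=
    (hasFDerivAt_id x).add_const v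
  have hcomp := (hg (x + v)).hasFDerivAt.comp x hT
  have heq : (g ∘ fun p : ℝ × ℝ => p + v) = g := funext fun p => hper p
  rw [heq] at hcomp
  have h2 := hcomp.fderiv
  rw [h2]
  simp

lemma per_pd {g : ℝ × ℝ → ℝ} (hg : ContDiff ℝ (⊤ : ℕ∞) g) (hper : Per g) (w : ℝ × ℝ) :
    Per (fun x => fderiv ℝ g x w) := by
  have hd := hg.differentiable (by simp)
  constructor
  · intro x
    have h1 : (x.1 + 2*Real.pi, x.2) = x + ((2*Real.pi, 0) : ℝ × ℝ) := by
      simp [Prod.ext_iff]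
    have h2 : ∀ p : ℝ × ℝ, g (p + ((2*Real.pi, 0) : ℝ × ℝ)) = g p := by
      intro p
      rw [show p + ((2*Real.pi, 0) : ℝ × ℝ) = (p.1 + 2*Real.pi, p.2) from by
        simp [Prod.ext_iff]]
      exact hper.1 p
    simp only [h1, fderiv_translate hd _ h2]
  · intro x
    have h1 : (x.1, x.2 + 2*Real.pi) = x + ((0, 2*Real.pi) : ℝ × ℝ) := by
      simp [Prod.ext_iff]
    have h2 : ∀ p : ℝ × ℝ, g (p + ((0, 2*Real.pi) : ℝ × ℝ)) = g p := by
      intro p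
      rw [show p + ((0, 2*Real.pi) : ℝ × ℝ) = (p.1, p.2 + 2*Real.pi) from by
        simp [Prod.ext_iff]]
      exact hper.2 p
    simp only [h1, fderiv_translate hd _ h2]

/-- FTC in the first variable on the box. -/
lemma integral_pd1 {g : ℝ × ℝ → ℝ} (hg : ContDiff ℝ (⊤ : ℕ∞) g) (hper : Per g) :
    ∫ x in box, fderiv ℝ g x ((1:ℝ), (0:ℝ)) = 0 := by
  set F : ℝ × ℝ → ℝ := fun x => fderiv ℝ g x ((1:ℝ), (0:ℝ)) with hFdef
  have hFc : Continuous F := (contpd hg _).continuous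
  have hint : IntegrableOn F box := intbox hFc
  have hd := hg.differentiable (by simp)
  have key : ∀ y : ℝ, ∫ x in Set.Ioc 0 (2*Real.pi), F (x, y) = 0 := by
    intro y
    have hder : ∀ x : ℝ, HasDerivAt (fun t => g (t, y)) (F (x, y)) x := by
      intro x
      exact (hd (x, y)).hasFDerivAt.comp_hasDerivAt x
        (HasDerivAt.prodMk (hasDerivAt_id x) (hasDerivAt_const x y))
    have hle : (0:ℝ) ≤ 2*Real.pi := by positivity
    rw [← intervalIntegral.integral_of_le hle]
    rw [intervalIntegral.integral_eq_sub_of_hasDerivAt (fun x _ => hder x)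
      ((hFc.comp (continuous_id.prodMk continuous_const)).intervalIntegrable 0 (2*Real.pi))]
    have h0 := hper.1 (0, y)
    simp only at h0
    rw [show ((0:ℝ) + 2*Real.pi) = 2*Real.pi by ring] at h0
    rw [h0]; ring
  have hbox : (∫ x in box, F x)
      = ∫ y in Set.Ioc 0 (2*Real.pi), ∫ x in Set.Ioc 0 (2*Real.pi), F (x, y) := by
    rw [box] at hint ⊢
    rw [Measure.volume_eq_prod] at hint ⊢
    simp only [← Measure.prod_restrict, IntegrableOn] at hint ⊢
    exact integral_prod_symm F hint
  rw [hbox]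
  simp [key]

/-- FTC in the second variable on the box. -/
lemma integral_pd2 {g : ℝ × ℝ → ℝ} (hg : ContDiff ℝ (⊤ : ℕ∞) g) (hper : Per g) :
    ∫ x in box, fderiv ℝ g x ((0:ℝ), (1:ℝ)) = 0 := by
  set F : ℝ × ℝ → ℝ := fun x => fderiv ℝ g x ((0:ℝ), (1:ℝ)) with hFdef
  have hFc : Continuous F := (contpd hg _).continuous
  have hint : IntegrableOn F box := intbox hFc
  have hd := hg.differentiable (by simp)
  have key : ∀ x : ℝ, ∫ y in Set.Ioc 0 (2*Real.pi), F (x, y) = 0 := by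
    intro x
    have hder : ∀ y : ℝ, HasDerivAt (fun t => g (x, t)) (F (x, y)) y := by
      intro y
      exact (hd (x, y)).hasFDerivAt.comp_hasDerivAt y
        (HasDerivAt.prodMk (hasDerivAt_const y x) (hasDerivAt_id y))
    have hle : (0:ℝ) ≤ 2*Real.pi := by positivity
    rw [← intervalIntegral.integral_of_le hle]
    rw [intervalIntegral.integral_eq_sub_of_hasDerivAt (fun y _ => hder y)
      ((hFc.comp (continuous_const.prodMk continuous_id)).intervalIntegrable 0 (2*Real.pi))]
    have h0 := hper.2 (x, 0)
    simp only at h0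
    rw [show ((0:ℝ) + 2*Real.pi) = 2*Real.pi by ring] at h0
    rw [h0]; ring
  have hbox : (∫ x in box, F x)
      = ∫ x in Set.Ioc 0 (2*Real.pi), ∫ y in Set.Ioc 0 (2*Real.pi), F (x, y) := by
    rw [box] at hint ⊢
    rw [Measure.volume_eq_prod] at hint ⊢
    exact setIntegral_prod F hint
  rw [hbox]
  simp [key]

lemma cont_grad {g : ℝ × ℝ → ℝ} (hg : ContDiff ℝ (⊤ : ℕ∞) g) : Continuous (grad g) := by
  have h : grad g = fun x => (fderiv ℝ g x (1, 0), fderiv ℝ g x (0, 1)) := rfl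
  rw [h]
  exact (contpd hg _).continuous.prodMk (contpd hg _).continuous

lemma cont_dot {u v : ℝ × ℝ → ℝ × ℝ} (hu : Continuous u) (hv : Continuous v) :
    Continuous fun x => dot (u x) (v x) := by
  simp only [dot]
  exact ((continuous_fst.comp hu).mul (continuous_fst.comp hv)).add
    ((continuous_snd.comp hu).mul (continuous_snd.comp hv))

/-- Integration by parts on the torus: `∫ ∇ρ·∇Φ = -∫ ρ ΔΦ`. -/
lemma div_identity {ρ Φ : ℝ × ℝ → ℝ} (hρ : ContDiff ℝ (⊤ : ℕ∞) ρ) (hΦ : ContDiff ℝ (⊤ : ℕ∞) Φ)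
    (hρper : Per ρ) (hΦper : Per Φ) :
    ∫ x in box, dot (grad ρ x) (grad Φ x) = - ∫ x in box, ρ x * lap Φ x := by
  set F₁ : ℝ × ℝ → ℝ := fun x => ρ x * fderiv ℝ Φ x (1, 0) with hF₁def
  set F₂ : ℝ × ℝ → ℝ := fun x => ρ x * fderiv ℝ Φ x (0, 1) with hF₂def
  have hF₁ : ContDiff ℝ (⊤ : ℕ∞) F₁ := hρ.mul (contpd hΦ _)
  have hF₂ : ContDiff ℝ (⊤ : ℕ∞) F₂ := hρ.mul (contpd hΦ _)
  have perF₁ : Per F₁ := by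
    constructor <;> intro x
    · have h := (per_pd hΦ hΦper ((1:ℝ), (0:ℝ))).1 x
      simp only at h
      show ρ _ * _ = _
      rw [hρper.1 x, h]
    · have h := (per_pd hΦ hΦper ((1:ℝ), (0:ℝ))).2 x
      simp only at h
      show ρ _ * _ = _
      rw [hρper.2 x, h]
  have perF₂ : Per F₂ := by
    constructor <;> intro x
    · have h := (per_pd hΦ hΦper ((0:ℝ), (1:ℝ))).1 x
      simp only at h
      show ρ _ * _ = _
      rw [hρper.1 x, h]
    · have h := (per_pd hΦ hΦper ((0:ℝ), (1:ℝ))).2 x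
      simp only at h
      show ρ _ * _ = _
      rw [hρper.2 x, h]
  have hpt : ∀ x, fderiv ℝ F₁ x ((1:ℝ), (0:ℝ)) + fderiv ℝ F₂ x ((0:ℝ), (1:ℝ))
      = dot (grad ρ x) (grad Φ x) + ρ x * lap Φ x := by
    intro x
    have h1 : HasFDerivAt F₁
        ((ρ x) • fderiv ℝ (fun y => fderiv ℝ Φ y (1, 0)) x
          + (fderiv ℝ Φ x (1, 0)) • fderiv ℝ ρ x) x :=
      (hρ.differentiable (by simp) x).hasFDerivAt.mul
        (((contpd hΦ (1, 0)).differentiable (by simp) x).hasFDerivAt)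
    have h2 : HasFDerivAt F₂
        ((ρ x) • fderiv ℝ (fun y => fderiv ℝ Φ y (0, 1)) x
          + (fderiv ℝ Φ x (0, 1)) • fderiv ℝ ρ x) x :=
      (hρ.differentiable (by simp) x).hasFDerivAt.mul
        (((contpd hΦ (0, 1)).differentiable (by simp) x).hasFDerivAt)
    rw [h1.fderiv, h2.fderiv]
    simp only [dot, grad, lap, ContinuousLinearMap.add_apply,
      ContinuousLinearMap.smul_apply, smul_eq_mul]
    ring
  have i1 : IntegrableOn (fun x => fderiv ℝ F₁ x ((1:ℝ), (0:ℝ))) box :=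
    intbox (contpd hF₁ _).continuous
  have i2 : IntegrableOn (fun x => fderiv ℝ F₂ x ((0:ℝ), (1:ℝ))) box :=
    intbox (contpd hF₂ _).continuous
  have hzero : ∫ x in box, (dot (grad ρ x) (grad Φ x) + ρ x * lap Φ x) = 0 := by
    have := integral_add i1 i2
    rw [integral_pd1 hF₁ perF₁, integral_pd2 hF₂ perF₂] at this
    rw [show (∫ x in box, (dot (grad ρ x) (grad Φ x) + ρ x * lap Φ x))
        = ∫ x in box, (fderiv ℝ F₁ x ((1:ℝ), (0:ℝ)) + fderiv ℝ F₂ x ((0:ℝ), (1:ℝ))) from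
      integral_congr_ae (Filter.Eventually.of_forall (fun x => (hpt x).symm))]
    simpa using this
  have cdot : Continuous (fun x => dot (grad ρ x) (grad Φ x)) :=
    cont_dot (cont_grad hρ) (cont_grad hΦ)
  have clap : Continuous (fun x => ρ x * lap Φ x) := by
    simp only [lap]
    exact hρ.continuous.mul (((contpd (contpd hΦ (1,0)) ((1:ℝ),(0:ℝ))).continuous).add
      ((contpd (contpd hΦ (0,1)) ((0:ℝ),(1:ℝ))).continuous))
  have := integral_add (intbox cdot) (intbox clap)
  rw [hzero] at this
  linarith [this]
/-- Entropy-dissipation lower bound: for nonnegative smooth periodic concentrations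
`c₁,…,c_N` on `𝕋²` with charge density `ρ = ∑ zᵢ cᵢ` and potential `-ΔΦ = ρ`,
`∑ᵢ Dᵢ ‖(∇cᵢ + zᵢcᵢ∇Φ)/√cᵢ‖_{L²}² ≥ D ‖ρ‖_{L²}²` where `D = minᵢ Dᵢ` and the
integrand is interpreted as `|2∇√cᵢ + zᵢ√cᵢ ∇Φ|²`. -/
theorem dissipation_ge_charge
    (N : ℕ) (hN : 0 < N)
    (D : Fin N → ℝ) (hD : ∀ i, 0 < D i) (z : Fin N → ℝ)
    (c : Fin N → ℝ × ℝ → ℝ) (Φ : ℝ × ℝ → ℝ)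
    (hc : ∀ i, ContDiff ℝ (⊤ : ℕ∞) (c i)) (hcnn : ∀ i x, 0 ≤ c i x)
    (hsqrt : ∀ i, ContDiff ℝ (⊤ : ℕ∞) (fun x => Real.sqrt (c i x)))
    (hΦ : ContDiff ℝ (⊤ : ℕ∞) Φ)
    (hcper : ∀ i, Per (c i)) (hΦper : Per Φ)
    (ρ : ℝ × ℝ → ℝ) (hρ : ρ = fun x => ∑ i, z i * c i x)
    (hpoisson : ∀ x, -(lap Φ x) = ρ x) :
    (⨅ i, D i) * (∫ x in box, (ρ x)^2)
      ≤ ∑ i, D i *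
          ∫ x in box,
            dot ((2:ℝ) • grad (fun y => Real.sqrt (c i y)) x
                  + (z i * Real.sqrt (c i x)) • grad Φ x)
                ((2:ℝ) • grad (fun y => Real.sqrt (c i y)) x
                  + (z i * Real.sqrt (c i x)) • grad Φ x) := by
  have hρsm : ContDiff ℝ (⊤ : ℕ∞) ρ := by
    rw [hρ]; exact ContDiff.sum fun i _ => contDiff_const.mul (hc i)
  have hρper : Per ρ := by
    constructor <;> intro x <;> rw [hρ] <;> simp only <;>
      exact Finset.sum_congr rfl fun i _ => by
        first
        | rw [(hcper i).1 x]
        | rw [(hcper i).2 x]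
  -- gradient of cᵢ in terms of gradient of √cᵢ
  have hgradc : ∀ i x (w : ℝ × ℝ), fderiv ℝ (c i) x w
      = 2 * Real.sqrt (c i x) * fderiv ℝ (fun y => Real.sqrt (c i y)) x w := by
    intro i x w
    have hmul : HasFDerivAt (fun y => Real.sqrt (c i y) * Real.sqrt (c i y))
        (Real.sqrt (c i x) • fderiv ℝ (fun y => Real.sqrt (c i y)) x
          + Real.sqrt (c i x) • fderiv ℝ (fun y => Real.sqrt (c i y)) x) x :=
      (((hsqrt i).differentiable (by simp) x).hasFDerivAt).mul
        (((hsqrt i).differentiable (by simp) x).hasFDerivAt)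
    have hc_eq : (c i) = fun y => Real.sqrt (c i y) * Real.sqrt (c i y) := by
      funext y; rw [Real.mul_self_sqrt (hcnn i y)]
    have h4 := hmul.fderiv
    rw [← hc_eq] at h4
    rw [h4]
    simp only [ContinuousLinearMap.add_apply, ContinuousLinearMap.smul_apply, smul_eq_mul]
    ring
  -- pointwise lower bound on each integrand
  have hQ : ∀ i x, 2 * z i * dot (grad (c i) x) (grad Φ x)
      ≤ dot ((2:ℝ) • grad (fun y => Real.sqrt (c i y)) x
            + (z i * Real.sqrt (c i x)) • grad Φ x)
          ((2:ℝ) • grad (fun y => Real.sqrt (c i y)) x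
            + (z i * Real.sqrt (c i x)) • grad Φ x) := by
    intro i x
    simp only [dot, grad, Prod.fst_add, Prod.snd_add, Prod.smul_fst, Prod.smul_snd,
      smul_eq_mul]
    rw [hgradc i x (1, 0), hgradc i x (0, 1)]
    nlinarith [sq_nonneg (fderiv ℝ (fun y => Real.sqrt (c i y)) x (1, 0)),
      sq_nonneg (fderiv ℝ (fun y => Real.sqrt (c i y)) x (0, 1)),
      sq_nonneg (z i * Real.sqrt (c i x) * fderiv ℝ Φ x (1, 0)),
      sq_nonneg (z i * Real.sqrt (c i x) * fderiv ℝ Φ x (0, 1))]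
  have hQpos : ∀ i x, 0 ≤ dot ((2:ℝ) • grad (fun y => Real.sqrt (c i y)) x
            + (z i * Real.sqrt (c i x)) • grad Φ x)
          ((2:ℝ) • grad (fun y => Real.sqrt (c i y)) x
            + (z i * Real.sqrt (c i x)) • grad Φ x) := by
    intro i x
    simp only [dot]
    exact add_nonneg (mul_self_nonneg _) (mul_self_nonneg _)
  -- continuity
  have hQc : ∀ i, Continuous (fun x => dot ((2:ℝ) • grad (fun y => Real.sqrt (c i y)) x
            + (z i * Real.sqrt (c i x)) • grad Φ x)
          ((2:ℝ) • grad (fun y => Real.sqrt (c i y)) x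
            + (z i * Real.sqrt (c i x)) • grad Φ x)) := by
    intro i
    have hV : Continuous (fun x => (2:ℝ) • grad (fun y => Real.sqrt (c i y)) x
        + (z i * Real.sqrt (c i x)) • grad Φ x) :=
      ((cont_grad (hsqrt i)).const_smul (2:ℝ)).add
        ((continuous_const.mul (hsqrt i).continuous).smul (cont_grad hΦ))
    exact cont_dot hV hV
  have hcrossc : ∀ i, Continuous (fun x => 2 * z i * dot (grad (c i) x) (grad Φ x)) :=
    fun i => continuous_const.mul (cont_dot (cont_grad (hc i)) (cont_grad hΦ))
  -- integral comparison
  have hIQ : ∀ i, (∫ x in box, 2 * z i * dot (grad (c i) x) (grad Φ x))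
      ≤ ∫ x in box, dot ((2:ℝ) • grad (fun y => Real.sqrt (c i y)) x
            + (z i * Real.sqrt (c i x)) • grad Φ x)
          ((2:ℝ) • grad (fun y => Real.sqrt (c i y)) x
            + (z i * Real.sqrt (c i x)) • grad Φ x) :=
    fun i => integral_mono (intbox (hcrossc i)) (intbox (hQc i)) (fun x => hQ i x)
  -- sum of the cross terms
  have hgradρ : ∀ x (w : ℝ × ℝ), fderiv ℝ ρ x w = ∑ i, z i * fderiv ℝ (c i) x w := by
    intro x w
    have h : HasFDerivAt ρ (∑ i, z i • fderiv ℝ (c i) x) x := by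
      rw [hρ]
      exact HasFDerivAt.fun_sum fun i _ =>
        (((hc i).differentiable (by simp) x).hasFDerivAt).const_mul (z i)
    rw [h.fderiv]
    simp [ContinuousLinearMap.sum_apply, smul_eq_mul]
  have hptsum : ∀ x, (∑ i, 2 * z i * dot (grad (c i) x) (grad Φ x))
      = 2 * dot (grad ρ x) (grad Φ x) := by
    intro x
    simp only [dot, grad, hgradρ]
    rw [Finset.sum_mul, Finset.sum_mul, ← Finset.sum_add_distrib, Finset.mul_sum]
    exact Finset.sum_congr rfl fun i _ => by ring
  have hsum : (∑ i, ∫ x in box, 2 * z i * dot (grad (c i) x) (grad Φ x))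
      = 2 * ∫ x in box, (ρ x)^2 := by
    rw [← integral_finset_sum _ (fun i _ => intbox (hcrossc i))]
    rw [show (∫ x in box, ∑ i, 2 * z i * dot (grad (c i) x) (grad Φ x))
        = ∫ x in box, 2 * dot (grad ρ x) (grad Φ x) from
      integral_congr_ae (Filter.Eventually.of_forall (fun x => hptsum x))]
    rw [integral_const_mul, div_identity hρsm hΦ hρper hΦper]
    have hlapeq : (fun x => ρ x * lap Φ x) = fun x => -((ρ x)^2) := by
      funext x
      have h := hpoisson x
      have hl : lap Φ x = -ρ x := by linarith
      rw [hl]; ring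
    rw [hlapeq, integral_neg, neg_neg]
  -- final assembly
  have hne : Nonempty (Fin N) := Fin.pos_iff_nonempty.mp hN
  have hDm0 : 0 ≤ ⨅ i, D i := le_ciInf fun i => (hD i).le
  have hDmle : ∀ i, (⨅ j, D j) ≤ D i := fun i => ciInf_le (Set.finite_range D).bddBelow i
  have hboxmeas : MeasurableSet box := measurableSet_Ioc.prod measurableSet_Ioc
  have hQint0 : ∀ i, 0 ≤ ∫ x in box, dot ((2:ℝ) • grad (fun y => Real.sqrt (c i y)) x
            + (z i * Real.sqrt (c i x)) • grad Φ x)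
          ((2:ℝ) • grad (fun y => Real.sqrt (c i y)) x
            + (z i * Real.sqrt (c i x)) • grad Φ x) :=
    fun i => setIntegral_nonneg hboxmeas fun x _ => hQpos i x
  have hρ2 : 0 ≤ ∫ x in box, (ρ x)^2 :=
    setIntegral_nonneg hboxmeas fun x _ => sq_nonneg _
  calc (⨅ i, D i) * ∫ x in box, (ρ x)^2
      ≤ (⨅ i, D i) * (2 * ∫ x in box, (ρ x)^2) := by nlinarith
    _ = (⨅ i, D i) * ∑ i, ∫ x in box, 2 * z i * dot (grad (c i) x) (grad Φ x) := by
        rw [hsum]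
    _ ≤ (⨅ i, D i) * ∑ i, ∫ x in box, dot ((2:ℝ) • grad (fun y => Real.sqrt (c i y)) x
            + (z i * Real.sqrt (c i x)) • grad Φ x)
          ((2:ℝ) • grad (fun y => Real.sqrt (c i y)) x
            + (z i * Real.sqrt (c i x)) • grad Φ x) :=
        mul_le_mul_of_nonneg_left (Finset.sum_le_sum fun i _ => hIQ i) hDm0
    _ = ∑ i, (⨅ j, D j) * ∫ x in box, dot ((2:ℝ) • grad (fun y => Real.sqrt (c i y)) x
            + (z i * Real.sqrt (c i x)) • grad Φ x)
          ((2:ℝ) • grad (fun y => Real.sqrt (c i y)) x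
            + (z i * Real.sqrt (c i x)) • grad Φ x) := Finset.mul_sum _ _ _
    _ ≤ ∑ i, D i * ∫ x in box, dot ((2:ℝ) • grad (fun y => Real.sqrt (c i y)) x
            + (z i * Real.sqrt (c i x)) • grad Φ x)
          ((2:ℝ) • grad (fun y => Real.sqrt (c i y)) x
            + (z i * Real.sqrt (c i x)) • grad Φ x) :=
        Finset.sum_le_sum fun i _ => mul_le_mul_of_nonneg_right (hDmle i) (hQint0 i)
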